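/- arXiv:1604.03149 — 2 statements merged into one kernel-verified Lean document; each statement's English description precedes it below -/
import Mathlib

section
/- The Klein icosahedral polynomials satisfy the relation 144𝔇² = -1728𝔅⁵ + 720𝔄ℭ𝔅³ - 80𝔄²ℭ²𝔅 + 64𝔄³(5𝔅²-𝔄ℭ)² + ℭ³ identically in ζ₀, ζ₁, ζ₂. -/
noncomputable def KleinA (z0 z1 z2 : ℂ) : ℂ := z0^2 + z1*z2

noncomputable def KleinB (z0 z1 z2 : ℂ) : ℂ :=
  8*z0^4*z1*z2 - 2*z0^2*z1^2*z2^2 + z1^3*z2^3 - z0*(z1^5 + z2^5)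

noncomputable def KleinC (z0 z1 z2 : ℂ) : ℂ :=
  320*z0^6*z1^2*z2^2 - 160*z0^4*z1^3*z2^3 + 20*z0^2*z1^4*z2^4 + 6*z1^5*z2^5
    - 4*z0*(z1^5 + z2^5)*(32*z0^4 - 20*z0^2*z1*z2 + 5*z1^2*z2^2) + z1^10 + z2^10

/-- The Klein icosahedral polynomials satisfy
144𝔇² = -1728𝔅⁵ + 720𝔄ℭ𝔅³ - 80𝔄²ℭ²𝔅 + 64𝔄³(5𝔅²-𝔄ℭ)² + ℭ³. -/
theorem klein_relation (z0 z1 z2 D : ℂ)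
    (hD : 12 * D =
      (z1^5 - z2^5) * (-1024*z0^10 + 3840*z0^8*z1*z2 - 3840*z0^6*z1^2*z2^2
        + 1200*z0^4*z1^3*z2^3 - 100*z0^2*z1^4*z2^4 + z1^5*z2^5)
      + z0*(z1^10 - z2^10)*(352*z0^4 - 160*z0^2*z1*z2 + 10*z1^2*z2^2)
      + (z1^15 - z2^15)) :
    144 * D^2 =
      -1728 * (KleinB z0 z1 z2)^5
      + 720 * (KleinA z0 z1 z2) * (KleinC z0 z1 z2) * (KleinB z0 z1 z2)^3
      - 80 * (KleinA z0 z1 z2)^2 * (KleinC z0 z1 z2)^2 * (KleinB z0 z1 z2)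
      + 64 * (KleinA z0 z1 z2)^3 * (5*(KleinB z0 z1 z2)^2 - (KleinA z0 z1 z2)*(KleinC z0 z1 z2))^2
      + (KleinC z0 z1 z2)^3 := by
  unfold KleinA KleinB KleinC
  linear_combination (12*D + ((z1^5 - z2^5) * (-1024*z0^10 + 3840*z0^8*z1*z2 - 3840*z0^6*z1^2*z2^2
        + 1200*z0^4*z1^3*z2^3 - 100*z0^2*z1^4*z2^4 + z1^5*z2^5)
      + z0*(z1^10 - z2^10)*(352*z0^4 - 160*z0^2*z1*z2 + 10*z1^2*z2^2)
      + (z1^15 - z2^15))) * hD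
end

section
/- With k₁ = 2⁵·5² and k₃ = 2²⁶·5¹⁰·3⁻², substituting X = k₁w₆, Y = k₂w₁₀, Z = k₃(5⁵w₁₀³ - (5³/2)w₆w₁₀² + (1/2⁴)w₁₀² + (9·25/2)w₆³w₁₀ - (1/2³)w₆²w₁₀ - 54w₆⁵ + (1/2⁴)w₆⁴) (where w₆ = s₆/g₂³, w₁₀ = s₁₀/g₂⁵) into the Klein relation 144Z = -1728X⁵ + 720X³Y - 80XY² + 64(5X²-Y)² + Y³ yields an identity in w₆, w₁₀ if and only if k₂ = 2¹⁰·5⁵. -/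
/-- with k₁ = 2⁵·5² and k₃ = 2²⁶·5¹⁰·3⁻², substituting X = k₁w₆,
Y = k₂w₁₀ and Z = k₃·(the Müller expression) into the Klein relation
144Z = -1728X⁵ + 720X³Y - 80XY² + 64(5X²-Y)² + Y³ yields an identity in
w₆, w₁₀ if and only if k₂ = 2¹⁰·5⁵. -/
theorem determine_k2 (k2 : ℂ) :
    (∀ w6 w10 : ℂ,
      144 * (2^26 * 5^10 / 3^2) *
        (5^5*w10^3 - (5^3/2)*w6*w10^2 + (1/2^4)*w10^2 + (9*25/2)*w6^3*w10
          - (1/2^3)*w6^2*w10 - 54*w6^5 + (1/2^4)*w6^4)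
      = -1728*(2^5*5^2*w6)^5 + 720*(2^5*5^2*w6)^3*(k2*w10)
          - 80*(2^5*5^2*w6)*(k2*w10)^2
          + 64*(5*(2^5*5^2*w6)^2 - k2*w10)^2 + (k2*w10)^3)
    ↔ k2 = 2^10 * 5^5 := by
  constructor
  · intro h
    have h1 := h 0 1
    have h2 := h 0 (-1)
    have hsq : k2^2 = ((2:ℂ)^10 * 5^5)^2 := by linear_combination (-(h1 + h2))/128
    have hcube : k2^3 = ((2:ℂ)^10 * 5^5)^3 := by linear_combination (h2 - h1)/2
    have hc : (((2:ℂ)^10 * 5^5)^2) ≠ 0 := by norm_num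
    have : k2 * ((2:ℂ)^10 * 5^5)^2 = (2^10 * 5^5) * ((2:ℂ)^10 * 5^5)^2 := by
      linear_combination hcube - k2 * hsq
    exact mul_right_cancel₀ hc this
  · rintro rfl
    intro w6 w10
    ring
end
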